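/- arXiv:1310.7055 — 4 statements merged into one kernel-verified Lean document; each statement's English description precedes it below -/
import Mathlib

section
/- Let n ≥ 1, c ≥ 1 be integers and let ω = (t_1, t_2, …) be a strictly increasing sequence of positive reals. Set i := B(c,n)(ω) − c. If i < n/2, then |(B(c,n)(ω) − c)²/(2n) − t_c| ≤ i/(2n) + i³/(3n²) + 2ci/n. -/
open MeasureTheory Filter Topology
open scoped ENNReal NNReal

/-- The function `f(p) = -log(1-p)` for `0 ≤ p < 1`, `f(1) = ∞`, evaluated at `p = i/n`,
taking values in `ℝ≥0∞`. -/
noncomputable def fE (n : ℕ) (i : ℕ) : ℝ≥0∞ :=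
  if i < n then ENNReal.ofReal (-Real.log (1 - (i : ℝ) / n)) else ⊤

/-- The embedded collision process: `Bemb n t c` is `B(c,n)(ω)` for the strictly increasing
sequence `ω = (t 1, t 2, …)` of positive reals (with `t 0 = 0`). -/
noncomputable def Bemb (n : ℕ) (t : ℕ → ℝ) : ℕ → ℕ
  | 0 => 0
  | c + 1 =>
      Bemb n t c +
        sInf {j : ℕ | 1 ≤ j ∧
          ENNReal.ofReal (t (c + 1) - t c) ≤
            ∑ i ∈ Finset.Ico (Bemb n t c - c) (Bemb n t c - c + j), fE n i}

/-!
Write `g i = -log (1 - i / n)` and `m_c = B(c,n)(ω) - c`. Step `c + 1` of the recursion adds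
the terms `g i`, `m_c ≤ i`, until their sum reaches `t (c + 1) - t c`; it uses the terms
`m_c ≤ i < m_{c+1}` and exactly one more. Telescoping, `∑_{i < m_c} g i ≤ t c`, and since `g` is
increasing, every extra term is at most `g m_c`, so `t c ≤ ∑_{i < m_c} g i + c · g m_c`. For
`m = m_c < n / 2` the bounds `x ≤ -log (1 - x) ≤ x + x²` on `[0, 1/2]` give
`m (m - 1) / (2n) ≤ ∑_{i < m} g i ≤ m (m - 1) / (2n) + m³ / (3n²)` and `g m ≤ 3m / (2n)`.
-/

open Finset

lemma le_neg_log_one_sub {x : ℝ} (hx : x < 1) : x ≤ -Real.log (1 - x) := by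
  linarith [Real.log_le_sub_one_of_pos (sub_pos.2 hx)]

/-- The fourth Taylor polynomial of `-log (1 - x)` plus its tail bound `x ^ 5 / (1 - x)`
stays below `x + x ^ 2` on `[0, 1/2]`. -/
lemma neg_log_one_sub_le {x : ℝ} (h0 : 0 ≤ x) (h1 : x ≤ 1 / 2) :
    -Real.log (1 - x) ≤ x + x ^ 2 := by
  have hx : |x| < 1 := by rw [abs_of_nonneg h0]; linarith
  have H := (abs_le.1 (Real.abs_log_sub_add_sum_range_le hx 4)).1
  simp only [abs_of_nonneg h0, sum_range_succ, sum_range_zero] at H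
  norm_num at H
  have htail : x ^ 5 / (1 - x) ≤ 2 * x ^ 5 := by
    rw [div_le_iff₀ (by linarith)]
    nlinarith [pow_nonneg h0 5]
  nlinarith [pow_nonneg h0 2, pow_nonneg h0 3, pow_nonneg h0 4, pow_nonneg h0 5,
    mul_le_mul_of_nonneg_left h1 (pow_nonneg h0 2),
    mul_le_mul_of_nonneg_left h1 (pow_nonneg h0 3),
    mul_le_mul_of_nonneg_left h1 (pow_nonneg h0 4)]

lemma sum_range_natCast_id (m : ℕ) : ∑ i ∈ range m, (i : ℝ) = m * (m - 1) / 2 := by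
  induction m with
  | zero => simp
  | succ m ih => rw [sum_range_succ, ih]; push_cast; ring

lemma three_mul_sum_range_sq_le (m : ℕ) : 3 * ∑ i ∈ range m, (i : ℝ) ^ 2 ≤ m ^ 3 := by
  induction m with
  | zero => simp
  | succ m ih =>
    rw [sum_range_succ, mul_add]
    push_cast
    nlinarith [m.cast_nonneg (α := ℝ)]

lemma abs_sq_div_sub_le {n m c : ℕ} {F g T : ℝ} (hm : 2 * m < n)
    (hF₁ : m * (m - 1) / (2 * n) ≤ F) (hF₂ : F ≤ m * (m - 1) / (2 * n) + m ^ 3 / (3 * n ^ 2))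
    (hg : g ≤ m / n + (m / n) ^ 2) (hFT : F ≤ T) (hTF : T ≤ F + c * g) :
    |(m : ℝ) ^ 2 / (2 * n) - T| ≤
      (m : ℝ) / (2 * n) + (m : ℝ) ^ 3 / (3 * (n : ℝ) ^ 2) + 2 * c * (m : ℝ) / n := by
  have hn : (0 : ℝ) < n := by exact_mod_cast m.zero_le.trans_lt (by omega)
  have hsq : ((m : ℝ) / n) ^ 2 ≤ m / (2 * n) := by
    rw [div_pow, div_le_div_iff₀ (by positivity) (by positivity)]
    have : (2 * m : ℝ) ≤ n := by exact_mod_cast hm.le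
    nlinarith [mul_le_mul_of_nonneg_left this (mul_nonneg m.cast_nonneg hn.le)]
  have hcg : c * g ≤ c * (m / n + m / (2 * n)) := by
    gcongr
    exact hg.trans (by gcongr)
  have hsplit : (m : ℝ) ^ 2 / (2 * n) = m * (m - 1) / (2 * n) + m / (2 * n) := by ring
  have hcm : (c : ℝ) * (m / n + m / (2 * n)) + c * m / (2 * n) = 2 * c * m / n := by ring
  have : (0 : ℝ) ≤ c * m / (2 * n) := by positivity
  have : (0 : ℝ) ≤ m / (2 * n) := by positivity
  have : (0 : ℝ) ≤ m ^ 3 / (3 * n ^ 2) + 2 * c * m / n := by positivity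
  rw [abs_le]
  constructor <;> linarith

section NegLogSums

variable {n m i : ℕ}

lemma div_le_neg_log_one_sub_div (h : i < n) : (i : ℝ) / n ≤ -Real.log (1 - (i : ℝ) / n) :=
  le_neg_log_one_sub ((div_lt_one (by exact_mod_cast i.zero_le.trans_lt h)).2
    (by exact_mod_cast h))

lemma neg_log_one_sub_div_nonneg (h : i < n) : 0 ≤ -Real.log (1 - (i : ℝ) / n) :=
  (div_nonneg i.cast_nonneg n.cast_nonneg).trans (div_le_neg_log_one_sub_div h)

lemma neg_log_one_sub_div_le (h : 2 * i < n) :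
    -Real.log (1 - (i : ℝ) / n) ≤ (i : ℝ) / n + ((i : ℝ) / n) ^ 2 := by
  have hn : (0 : ℝ) < n := by exact_mod_cast (Nat.zero_le _).trans_lt h
  refine neg_log_one_sub_le (by positivity) ?_
  rw [div_le_iff₀ hn]
  have : (2 * i : ℝ) ≤ n := by exact_mod_cast h.le
  linarith

lemma le_sum_range_neg_log (hm : m ≤ n) :
    m * (m - 1) / (2 * n) ≤ ∑ i ∈ range m, -Real.log (1 - (i : ℝ) / n) :=
  calc (m : ℝ) * (m - 1) / (2 * n) = ∑ i ∈ range m, (i : ℝ) / n := by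
        rw [← sum_div, sum_range_natCast_id, div_div]
    _ ≤ _ := sum_le_sum fun i hi =>
        div_le_neg_log_one_sub_div ((mem_range.1 hi).trans_le hm)

lemma sum_range_neg_log_le (hm : 2 * m < n) :
    ∑ i ∈ range m, -Real.log (1 - (i : ℝ) / n) ≤
      m * (m - 1) / (2 * n) + m ^ 3 / (3 * n ^ 2) := by
  have hn : (0 : ℝ) < n := by exact_mod_cast (Nat.zero_le _).trans_lt hm
  calc ∑ i ∈ range m, -Real.log (1 - (i : ℝ) / n)
      ≤ ∑ i ∈ range m, ((i : ℝ) / n + ((i : ℝ) / n) ^ 2) :=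
        sum_le_sum fun i hi => neg_log_one_sub_div_le (by linarith [mem_range.1 hi])
    _ = m * (m - 1) / (2 * n) + (3 * ∑ i ∈ range m, (i : ℝ) ^ 2) / (3 * n ^ 2) := by
        simp only [sum_add_distrib, div_pow, ← sum_div, sum_range_natCast_id]
        field_simp
    _ ≤ _ := by gcongr; exact three_mul_sum_range_sq_le m

lemma fE_eq_top (h : n ≤ i) : fE n i = ⊤ := if_neg h.not_gt

lemma fE_of_lt (h : i < n) : fE n i = ENNReal.ofReal (-Real.log (1 - (i : ℝ) / n)) := if_pos h

lemma fE_mono : Monotone (fE n) := by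
  intro i k hik
  rcases lt_or_ge k n with hk | hk
  · rw [fE_of_lt (hik.trans_lt hk), fE_of_lt hk]
    have hn : (0 : ℝ) < n := by exact_mod_cast (Nat.zero_le _).trans_lt hk
    have hkn : (k : ℝ) / n < 1 := (div_lt_one hn).2 (by exact_mod_cast hk)
    gcongr
  · rw [fE_eq_top hk]
    exact le_top

lemma sum_range_fE (hm : m ≤ n) :
    ∑ i ∈ range m, fE n i = ENNReal.ofReal (∑ i ∈ range m, -Real.log (1 - (i : ℝ) / n)) := by
  have hlt : ∀ i ∈ range m, i < n := fun i hi => (mem_range.1 hi).trans_le hm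
  rw [ENNReal.ofReal_sum_of_nonneg fun i hi => neg_log_one_sub_div_nonneg (hlt i hi)]
  exact sum_congr rfl fun i hi => fE_of_lt (hlt i hi)

end NegLogSums

namespace Bemb

variable (n : ℕ) (t : ℕ → ℝ)

/-- The paper's `i = B(c,n)(ω) - c`; it is also the start `J` of the window searched at
step `c + 1`. -/
noncomputable def index (c : ℕ) : ℕ := Bemb n t c - c

def stepSet (c : ℕ) : Set ℕ :=
  {j | 1 ≤ j ∧ ENNReal.ofReal (t (c + 1) - t c) ≤
    ∑ i ∈ Ico (index n t c) (index n t c + j), fE n i}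

theorem succ_eq_add_sInf (c : ℕ) : Bemb n t (c + 1) = Bemb n t c + sInf (stepSet n t c) := rfl

/-- The window of length `n + 1` reaches `fE n n = ⊤`, so the infimum is attained. -/
lemma stepSet_nonempty (c : ℕ) : (stepSet n t c).Nonempty := by
  refine ⟨n + 1, by omega, ?_⟩
  rw [ENNReal.sum_eq_top.2 ⟨index n t c + n, by simp, fE_eq_top (by omega)⟩]
  exact le_top

lemma one_le_sInf_stepSet (c : ℕ) : 1 ≤ sInf (stepSet n t c) :=
  (Nat.sInf_mem (stepSet_nonempty n t c)).1

lemma self_le (c : ℕ) : c ≤ Bemb n t c := by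
  induction c with
  | zero => exact le_rfl
  | succ c ih => rw [succ_eq_add_sInf]; have := one_le_sInf_stepSet n t c; omega

lemma index_succ_add_one (c : ℕ) :
    index n t (c + 1) + 1 = index n t c + sInf (stepSet n t c) := by
  have := self_le n t c
  have := one_le_sInf_stepSet n t c
  simp only [index, succ_eq_add_sInf]
  omega

lemma index_mono : Monotone (index n t) :=
  monotone_nat_of_le_succ fun c => by
    have := index_succ_add_one n t c
    have := one_le_sInf_stepSet n t c
    omega

lemma ofReal_le_sum_Ico_index (c : ℕ) :
    ENNReal.ofReal (t (c + 1) - t c) ≤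
      ∑ i ∈ Ico (index n t c) (index n t (c + 1) + 1), fE n i := by
  rw [index_succ_add_one]
  exact (Nat.sInf_mem (stepSet_nonempty n t c)).2

/-- By minimality of the step, the window one shorter falls short of `t (c + 1) - t c`. -/
lemma sum_Ico_index_le (c : ℕ) :
    ∑ i ∈ Ico (index n t c) (index n t (c + 1)), fE n i ≤
      ENNReal.ofReal (t (c + 1) - t c) := by
  have hstep := index_succ_add_one n t c
  rcases (one_le_sInf_stepSet n t c).eq_or_lt with h | h
  · rw [show index n t (c + 1) = index n t c by omega, Ico_self, sum_empty]
    exact zero_le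
  · have hmin : sInf (stepSet n t c) - 1 ∉ stepSet n t c :=
      Nat.notMem_of_lt_sInf (by omega)
    rw [show index n t (c + 1) = index n t c + (sInf (stepSet n t c) - 1) by omega]
    exact le_of_lt (not_le.1 fun hle => hmin ⟨by omega, hle⟩)

lemma sum_range_index_le (ht : Monotone t) (ht0 : 0 ≤ t 0) (c : ℕ) :
    ∑ i ∈ range (index n t c), fE n i ≤ ENNReal.ofReal (t c) := by
  induction c with
  | zero => simp [index, Bemb]
  | succ c ih =>
    have htc : 0 ≤ t c := ht0.trans (ht c.zero_le)
    have hinc : 0 ≤ t (c + 1) - t c := sub_nonneg.2 (ht c.le_succ)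
    calc ∑ i ∈ range (index n t (c + 1)), fE n i
        = ∑ i ∈ range (index n t c), fE n i +
            ∑ i ∈ Ico (index n t c) (index n t (c + 1)), fE n i :=
          (sum_range_add_sum_Ico _ (index_mono n t c.le_succ)).symm
      _ ≤ ENNReal.ofReal (t c) + ENNReal.ofReal (t (c + 1) - t c) :=
          add_le_add ih (sum_Ico_index_le n t c)
      _ = ENNReal.ofReal (t (c + 1)) := by
          rw [← ENNReal.ofReal_add htc hinc, add_sub_cancel]

/-- Each step overshoots by at most one term, and by monotonicity of `fE n` every overshoot
is at most the last one. -/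
lemma ofReal_le_sum_range_index (ht0 : t 0 ≤ 0) (c : ℕ) :
    ENNReal.ofReal (t c) ≤
      ∑ i ∈ range (index n t c), fE n i + c * fE n (index n t c) := by
  induction c with
  | zero => simp [ENNReal.ofReal_eq_zero.2 ht0]
  | succ c ih =>
    set a := index n t c
    set b := index n t (c + 1)
    have hab : a ≤ b := index_mono n t c.le_succ
    calc ENNReal.ofReal (t (c + 1))
        ≤ ENNReal.ofReal (t c) + ENNReal.ofReal (t (c + 1) - t c) := by
          simpa using ENNReal.ofReal_add_le (p := t c) (q := t (c + 1) - t c)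
      _ ≤ (∑ i ∈ range a, fE n i + c * fE n a) + ∑ i ∈ Ico a (b + 1), fE n i :=
          add_le_add ih (ofReal_le_sum_Ico_index n t c)
      _ = ∑ i ∈ range b, fE n i + (fE n b + c * fE n a) := by
          rw [add_right_comm, sum_range_add_sum_Ico _ (hab.trans b.le_succ), sum_range_succ]
          ring
      _ ≤ ∑ i ∈ range b, fE n i + ↑(c + 1) * fE n b := by
          gcongr
          rw [Nat.cast_succ, add_mul, one_mul, add_comm]
          gcongr
          exact fE_mono hab

lemma sum_range_index_neg_log_le (ht : Monotone t) (ht0 : 0 ≤ t 0) {c : ℕ}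
    (hc : index n t c ≤ n) :
    ∑ i ∈ range (index n t c), -Real.log (1 - (i : ℝ) / n) ≤ t c := by
  have h := sum_range_index_le n t ht ht0 c
  rw [sum_range_fE hc] at h
  exact (ENNReal.ofReal_le_ofReal_iff (ht0.trans (ht c.zero_le))).1 h

lemma le_sum_range_index_neg_log_add (ht0 : t 0 ≤ 0) {c : ℕ} (hc : index n t c < n) :
    t c ≤ ∑ i ∈ range (index n t c), -Real.log (1 - (i : ℝ) / n) +
      c * -Real.log (1 - (index n t c : ℝ) / n) := by
  have hlast := neg_log_one_sub_div_nonneg hc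
  have hsum : 0 ≤ ∑ i ∈ range (index n t c), -Real.log (1 - (i : ℝ) / n) :=
    sum_nonneg fun i hi => neg_log_one_sub_div_nonneg ((mem_range.1 hi).trans hc)
  have h := ofReal_le_sum_range_index n t ht0 c
  rw [sum_range_fE hc.le, fE_of_lt hc, ← ENNReal.ofReal_natCast,
    ← ENNReal.ofReal_mul c.cast_nonneg, ← ENNReal.ofReal_add hsum (by positivity)] at h
  exact (ENNReal.ofReal_le_ofReal_iff (by positivity)).1 h

end Bemb

theorem stmt_2_general (n c : ℕ)
    (t : ℕ → ℝ) (ht : StrictMono t) (ht0 : t 0 = 0)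
    (hi : ((Bemb n t c - c : ℕ) : ℝ) < n / 2) :
    |((Bemb n t c - c : ℕ) : ℝ) ^ 2 / (2 * n) - t c| ≤
      ((Bemb n t c - c : ℕ) : ℝ) / (2 * n) +
        ((Bemb n t c - c : ℕ) : ℝ) ^ 3 / (3 * (n : ℝ) ^ 2) +
        2 * c * ((Bemb n t c - c : ℕ) : ℝ) / n := by
  rw [show Bemb n t c - c = Bemb.index n t c from rfl] at hi ⊢
  have hm : 2 * Bemb.index n t c < n := by
    exact_mod_cast (by linarith : 2 * (Bemb.index n t c : ℝ) < n)
  exact abs_sq_div_sub_le hm (le_sum_range_neg_log (by omega)) (sum_range_neg_log_le hm)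
    (neg_log_one_sub_div_le hm) (Bemb.sum_range_index_neg_log_le n t ht.monotone ht0.ge (by omega))
    (Bemb.le_sum_range_index_neg_log_add n t ht0.le (by omega))

theorem stmt_2 (n c : ℕ) (hn : 1 ≤ n) (hc : 1 ≤ c)
    (t : ℕ → ℝ) (ht : StrictMono t) (ht0 : t 0 = 0)
    (hi : ((Bemb n t c - c : ℕ) : ℝ) < n / 2) :
    |((Bemb n t c - c : ℕ) : ℝ) ^ 2 / (2 * n) - t c| ≤
      ((Bemb n t c - c : ℕ) : ℝ) / (2 * n) +
        ((Bemb n t c - c : ℕ) : ℝ) ^ 3 / (3 * (n : ℝ) ^ 2) +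
        2 * c * ((Bemb n t c - c : ℕ) : ℝ) / n :=
  stmt_2_general n c t ht ht0 hi
end

section
/- Let ω = (t_1, t_2, …) be any strictly increasing sequence of positive reals. Then for every fixed integer c ≥ 1, B(c,n)(ω)/√(2n) → √(t_c) as n → ∞. -/
/-
Let `J = B(c,n) - c` be where the `(c+1)`-st window starts and `M = J + j` where it ends. Using
`x ≤ -log (1 - x) ≤ x / (1 - x)` and `2 ∑_{J ≤ i < M} i = M² - J² + O(M)`, minimality of `j` gives
`M² ≤ J² + 2nΔ + O(M)`, and reaching `Δ = t_{c+1} - t_c` gives `2Δ(n - M) ≤ M² - J² + O(M)`.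
The first bound forces `M = O(√n)`, so both bounds say `M²/(2n) = J²/(2n) + Δ + o(1)`. Inductively
`B(c,n)²/(2n) → t_c`, the shift by `c` being negligible against `√n`.
-/

open MeasureTheory Filter Topology
open scoped ENNReal NNReal

open Finset

lemma neg_log_one_sub_le_s3 {x : ℝ} (hx : x < 1) : -Real.log (1 - x) ≤ x / (1 - x) := by
  have h := Real.one_sub_inv_le_log_of_pos (sub_pos.2 hx)
  have : 1 - (1 - x)⁻¹ = -(x / (1 - x)) := by field_simp [(sub_pos.2 hx).ne']; ring
  linarith

lemma two_mul_sum_Ico_natCast {J M : ℕ} (h : J ≤ M) :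
    2 * ∑ i ∈ Ico J M, (i : ℝ) = (M : ℝ) ^ 2 - M - (J : ℝ) ^ 2 + J := by
  induction M, h using Nat.le_induction with
  | base => simp
  | succ M hJM ih => rw [sum_Ico_succ_top hJM, mul_add, ih]; push_cast; ring

lemma fE_of_le {n i : ℕ} (h : n ≤ i) : fE n i = ⊤ := if_neg h.not_gt

lemma ofReal_div_le_fE (n i : ℕ) : ENNReal.ofReal (i / n) ≤ fE n i := by
  rcases lt_or_ge i n with h | h
  · have hn : (0 : ℝ) < n := by exact_mod_cast i.zero_le.trans_lt h
    rw [fE, if_pos h]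
    exact ENNReal.ofReal_le_ofReal <| le_neg_log_one_sub <| (div_lt_one hn).2 (by exact_mod_cast h)
  · simp [fE_of_le h]

lemma fE_le_ofReal_div {n m i : ℕ} (hi : i < m) (hm : m < n) :
    fE n i ≤ ENNReal.ofReal (i / (n - m)) := by
  have hn : (0 : ℝ) < n := by exact_mod_cast m.zero_le.trans_lt hm
  have hnm : (0 : ℝ) < n - m := sub_pos.2 (by exact_mod_cast hm)
  rw [fE, if_pos (hi.trans hm)]
  refine ENNReal.ofReal_le_ofReal <| (neg_log_one_sub_le_s3 <| (div_lt_one hn).2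
    (by exact_mod_cast hi.trans hm)).trans ?_
  rw [one_sub_div hn.ne', div_div_div_cancel_right₀ hn.ne']
  gcongr

noncomputable def hittingTime (n J : ℕ) (Δ : ℝ) : ℕ :=
  sInf {j : ℕ | 1 ≤ j ∧ ENNReal.ofReal Δ ≤ ∑ i ∈ Ico J (J + j), fE n i}

lemma Bemb_succ (n : ℕ) (t : ℕ → ℝ) (c : ℕ) :
    Bemb n t (c + 1) = Bemb n t c + hittingTime n (Bemb n t c - c) (t (c + 1) - t c) := rfl

section hittingTime

variable {n J : ℕ} {Δ : ℝ}

lemma hittingTime_mem :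
    hittingTime n J Δ ∈ {j : ℕ | 1 ≤ j ∧ ENNReal.ofReal Δ ≤ ∑ i ∈ Ico J (J + j), fE n i} := by
  refine Nat.sInf_mem ⟨n + 1, by omega, ?_⟩
  calc ENNReal.ofReal Δ ≤ fE n (J + n) := by simp [fE_of_le (Nat.le_add_left n J)]
    _ ≤ ∑ i ∈ Ico J (J + (n + 1)), fE n i :=
      single_le_sum (fun _ _ => zero_le) (by simp only [mem_Ico]; omega)

lemma one_le_hittingTime : 1 ≤ hittingTime n J Δ := hittingTime_mem.1

lemma ofReal_le_sum_hittingTime :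
    ENNReal.ofReal Δ ≤ ∑ i ∈ Ico J (J + hittingTime n J Δ), fE n i := hittingTime_mem.2

lemma sum_lt_of_lt_hittingTime {j : ℕ} (hj : 1 ≤ j) (h : j < hittingTime n J Δ) :
    ∑ i ∈ Ico J (J + j), fE n i < ENNReal.ofReal Δ :=
  not_le.1 fun hle => Nat.notMem_of_lt_sInf h ⟨hj, hle⟩

lemma sq_add_hittingTime_le (hn : 0 < n) (hΔ : 0 ≤ Δ) :
    ((J + hittingTime n J Δ : ℕ) : ℝ) ^ 2 ≤
      (J : ℝ) ^ 2 + 2 * n * Δ + 4 * (J + hittingTime n J Δ : ℕ) := by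
  obtain ⟨j, hj⟩ : ∃ j, hittingTime n J Δ = j + 1 :=
    ⟨_, (Nat.sub_add_cancel one_le_hittingTime).symm⟩
  rw [hj]
  rcases Nat.eq_zero_or_pos j with rfl | hj1
  · push_cast
    nlinarith [J.cast_nonneg (α := ℝ)]
  have hsum : ∑ i ∈ Ico J (J + j), (i : ℝ) / n < Δ := by
    have h := (sum_le_sum fun i _ => ofReal_div_le_fE n i).trans_lt
      (sum_lt_of_lt_hittingTime (J := J) (Δ := Δ) hj1 (by omega))
    rw [← ENNReal.ofReal_sum_of_nonneg fun i _ => by positivity] at h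
    exact (ENNReal.ofReal_lt_ofReal_iff'.1 h).1
  rw [← sum_div, div_lt_iff₀ (by exact_mod_cast hn)] at hsum
  have hgauss := two_mul_sum_Ico_natCast (Nat.le_add_right J j)
  push_cast at hgauss ⊢
  nlinarith

lemma mul_sub_le_sq_add_hittingTime (hM : J + hittingTime n J Δ < n) :
    2 * Δ * (n - (J + hittingTime n J Δ : ℕ)) ≤
      ((J + hittingTime n J Δ : ℕ) : ℝ) ^ 2 - (J : ℝ) ^ 2 + (J + hittingTime n J Δ : ℕ) := by
  set M := J + hittingTime n J Δ
  have hnM : (0 : ℝ) < n - M := sub_pos.2 (by exact_mod_cast hM)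
  have hsum : Δ ≤ ∑ i ∈ Ico J M, (i : ℝ) / (n - M) := by
    have h := ofReal_le_sum_hittingTime.trans <| sum_le_sum fun i hi =>
      fE_le_ofReal_div (mem_Ico.1 hi).2 hM
    rw [← ENNReal.ofReal_sum_of_nonneg fun i _ => by positivity] at h
    exact (ENNReal.ofReal_le_ofReal_iff (by positivity)).1 h
  rw [← sum_div, le_div_iff₀ hnM] at hsum
  have hgauss := two_mul_sum_Ico_natCast (Nat.le_add_right J (hittingTime n J Δ))
  have hJM : (J : ℝ) ≤ M := by exact_mod_cast Nat.le_add_right J _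
  nlinarith

end hittingTime

lemma tendsto_zero_of_sq_le_add_mul {x a b : ℕ → ℝ} (hx : ∀ n, 0 ≤ x n)
    (h : ∀ᶠ n in atTop, x n ^ 2 ≤ a n + b n * x n)
    (ha : Tendsto a atTop (𝓝 0)) (hb : Tendsto b atTop (𝓝 0)) : Tendsto x atTop (𝓝 0) := by
  have hbound : Tendsto (fun n => |b n| + √|a n|) atTop (𝓝 0) := by
    simpa using hb.abs.add ha.abs.sqrt
  refine tendsto_of_tendsto_of_tendsto_of_le_of_le' tendsto_const_nhds hbound
    (Eventually.of_forall hx) (h.mono fun n hn => ?_)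
  -- otherwise `x² - b x ≥ x (x - |b|) > √|a| ^ 2 ≥ a`
  by_contra! hlt
  have hsq : |a n| < x n * (x n - |b n|) := by
    rw [← Real.mul_self_sqrt (abs_nonneg (a n))]
    exact mul_lt_mul'' (by linarith [abs_nonneg (b n)]) (by linarith) (Real.sqrt_nonneg _)
      (Real.sqrt_nonneg _)
  linarith [le_abs_self (a n), mul_le_mul_of_nonneg_left (le_abs_self (b n)) (hx n)]

lemma tendsto_sq_div_two_mul_of_bounds {J M : ℕ → ℝ} {A Δ : ℝ} (hJ0 : ∀ n, 0 ≤ J n)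
    (hJM : ∀ n, J n ≤ M n) (hJ : Tendsto (fun n : ℕ => J n ^ 2 / (2 * n)) atTop (𝓝 A))
    (hup : ∀ᶠ n : ℕ in atTop, M n ^ 2 ≤ J n ^ 2 + 2 * n * Δ + 4 * M n)
    (hlow : ∀ᶠ n : ℕ in atTop, M n < n → 2 * Δ * (n - M n) ≤ M n ^ 2 - J n ^ 2 + M n) :
    Tendsto (fun n : ℕ => M n ^ 2 / (2 * n)) atTop (𝓝 (A + Δ)) := by
  have hinv : Tendsto (fun n : ℕ => (n : ℝ)⁻¹) atTop (𝓝 0) := tendsto_inv_atTop_nhds_zero_nat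
  have hM0 n : 0 ≤ M n := (hJ0 n).trans (hJM n)
  have hMn : Tendsto (fun n : ℕ => M n / n) atTop (𝓝 0) := by
    refine tendsto_zero_of_sq_le_add_mul (fun n => div_nonneg (hM0 n) n.cast_nonneg)
      (a := fun n => J n ^ 2 / (2 * n) * (2 * (n : ℝ)⁻¹) + 2 * Δ * (n : ℝ)⁻¹)
      (b := fun n => 4 * (n : ℝ)⁻¹) ?_ ?_ (by simpa using hinv.const_mul 4)
    · filter_upwards [hup, eventually_gt_atTop 0] with n hn hpos
      have : (0 : ℝ) < n := by exact_mod_cast hpos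
      field_simp
      linarith
    · simpa using (hJ.mul (hinv.const_mul 2)).add (hinv.const_mul (2 * Δ))
  have hlower : Tendsto (fun n : ℕ => J n ^ 2 / (2 * n) + Δ * (1 - M n / n) - M n / n / 2)
      atTop (𝓝 (A + Δ)) := by
    simpa using (hJ.add ((hMn.const_sub 1).const_mul Δ)).sub (hMn.div_const 2)
  have hupper : Tendsto (fun n : ℕ => J n ^ 2 / (2 * n) + Δ + 2 * (M n / n))
      atTop (𝓝 (A + Δ)) := by
    simpa using (hJ.add_const Δ).add (hMn.const_mul 2)
  refine tendsto_of_tendsto_of_tendsto_of_le_of_le' hlower hupper ?_ ?_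
  · filter_upwards [hlow, hMn.eventually (gt_mem_nhds zero_lt_one), eventually_gt_atTop 0]
      with n hn hlt hpos
    have : (0 : ℝ) < n := by exact_mod_cast hpos
    have := hn ((div_lt_one this).1 hlt)
    field_simp
    linarith
  · filter_upwards [hup, eventually_gt_atTop 0] with n hn hpos
    have : (0 : ℝ) < n := by exact_mod_cast hpos
    field_simp
    linarith

lemma tendsto_add_hittingTime {J : ℕ → ℕ} {A Δ : ℝ} (hΔ : 0 ≤ Δ)
    (hJ : Tendsto (fun n : ℕ => (J n : ℝ) ^ 2 / (2 * n)) atTop (𝓝 A)) :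
    Tendsto (fun n : ℕ => ((J n + hittingTime n (J n) Δ : ℕ) : ℝ) ^ 2 / (2 * n)) atTop
      (𝓝 (A + Δ)) :=
  tendsto_sq_div_two_mul_of_bounds (fun n => Nat.cast_nonneg _)
    (fun n => by exact_mod_cast Nat.le_add_right _ _) hJ
    ((eventually_gt_atTop 0).mono fun _ hn => sq_add_hittingTime_le hn hΔ)
    (Eventually.of_forall fun _ hM => mul_sub_le_sq_add_hittingTime (by exact_mod_cast hM))

lemma tendsto_div_sqrt_two_mul_iff {x : ℕ → ℝ} {A : ℝ} (hx : ∀ n, 0 ≤ x n) (hA : 0 ≤ A) :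
    Tendsto (fun n : ℕ => x n / √(2 * n)) atTop (𝓝 √A) ↔
      Tendsto (fun n : ℕ => x n ^ 2 / (2 * n)) atTop (𝓝 A) := by
  have hsq n : x n / √(2 * n) = √(x n ^ 2 / (2 * n)) := by
    rw [Real.sqrt_div' _ (by positivity), Real.sqrt_sq (hx n)]
  simp only [hsq]
  refine ⟨fun h => ?_, fun h => h.sqrt⟩
  have hsq' n : √(x n ^ 2 / (2 * n)) ^ 2 = x n ^ 2 / (2 * n) := Real.sq_sqrt (by positivity)
  simpa only [hsq', Real.sq_sqrt hA] using h.pow 2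

lemma tendsto_const_div_sqrt_two_mul (k : ℝ) :
    Tendsto (fun n : ℕ => k / √(2 * n)) atTop (𝓝 0) :=
  tendsto_const_nhds.div_atTop <| Real.tendsto_sqrt_atTop.comp <|
    tendsto_natCast_atTop_atTop.const_mul_atTop two_pos

lemma le_Bemb (n : ℕ) (t : ℕ → ℝ) (c : ℕ) : c ≤ Bemb n t c := by
  induction c with
  | zero => exact le_rfl
  | succ c ih =>
    have := one_le_hittingTime (n := n) (J := Bemb n t c - c) (Δ := t (c + 1) - t c)
    rw [Bemb_succ]
    omega

lemma tendsto_Bemb_succ {t : ℕ → ℝ} {c : ℕ} (htc : 0 ≤ t c) (hmono : t c ≤ t (c + 1))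
    (h : Tendsto (fun n : ℕ => (Bemb n t c : ℝ) / √(2 * n)) atTop (𝓝 √(t c))) :
    Tendsto (fun n : ℕ => (Bemb n t (c + 1) : ℝ) / √(2 * n)) atTop (𝓝 √(t (c + 1))) := by
  have hJ : Tendsto (fun n : ℕ => ((Bemb n t c - c : ℕ) : ℝ) / √(2 * n)) atTop (𝓝 √(t c)) := by
    simpa [Nat.cast_sub (le_Bemb _ t c), sub_div] using h.sub (tendsto_const_div_sqrt_two_mul c)
  have hstep := tendsto_add_hittingTime (sub_nonneg.2 hmono)
    ((tendsto_div_sqrt_two_mul_iff (fun _ => Nat.cast_nonneg _) htc).1 hJ)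
  rw [add_sub_cancel] at hstep
  have := ((tendsto_div_sqrt_two_mul_iff (fun _ => Nat.cast_nonneg _) (htc.trans hmono)).2
    hstep).add (tendsto_const_div_sqrt_two_mul c)
  rw [add_zero] at this
  refine this.congr fun n => ?_
  rw [Bemb_succ, ← add_div]
  push_cast [Nat.cast_sub (le_Bemb n t c)]
  ring

theorem stmt_3_general (t : ℕ → ℝ) (ht : StrictMono t) (ht0 : t 0 = 0) (c : ℕ) :
    Tendsto (fun n : ℕ => (Bemb n t c : ℝ) / Real.sqrt (2 * n)) atTop
      (nhds (Real.sqrt (t c))) := by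
  induction c with
  | zero => simp [Bemb, ht0]
  | succ c ih => exact tendsto_Bemb_succ (ht0 ▸ ht.monotone c.zero_le) (ht.monotone c.le_succ) ih

theorem stmt_3 (t : ℕ → ℝ) (ht : StrictMono t) (ht0 : t 0 = 0) (c : ℕ) (hc : 1 ≤ c) :
    Tendsto (fun n : ℕ => (Bemb n t c : ℝ) / Real.sqrt (2 * n)) atTop
      (nhds (Real.sqrt (t c))) :=
  stmt_3_general t ht ht0 c
end

section
/- Fix 0 < K < ∞. For every integer n ≥ 1, every integer c with 1 ≤ c ≤ Kn, and every real t > max(8K, 44): P(B(c,n)/√(2cn) > √t) ≤ c·e^{−ct/8}. -/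
/-!
If `B(c,n) > √(2cnt)` then the first `b := ⌊√(2cnt)⌋` throws produce fewer than `c` collisions.
Call a throw a repeat if its bin was hit by an earlier throw; the collisions are exactly the
repeats. A sequence of `b` throws with `j` repeats is determined by the set of repeat positions
(`C(b,j)` choices), the earlier throw each repeat copies (at most `b^j` choices) and the distinct
bins of the other throws (`n (n-1) ⋯ (n-b+j+1)` choices), and each sequence has probability
`n^(-b)`. Since `c ≤ Kn` and `t > 8K` give `nt ≥ 8c`, we have `b ≥ 4c`, so the falling factorial
is at most `n^(b-j) e^(-9ct/32)`, while `C(b,j) b^j / n^j ≤ (2ct)^j / j! ≤ e^(5ct/32)` for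
`t ≥ 37`. Hence each `j < c` contributes at most `e^(-ct/8)`.
-/

open MeasureTheory ProbabilityTheory Filter Topology
open scoped ENNReal NNReal

/-- Number of collisions after `b` throws, `C(b,n) = b - |{X_1,…,X_b}|`. -/
def collisions {Ω : Type*} (X : ℕ → Ω → ℕ) (b : ℕ) (ω : Ω) : ℕ :=
  b - ((Finset.range b).image fun i => X i ω).card

/-- `B(c,n) = inf { b : C(b,n) ≥ c }` in the balls-in-bins model. -/
noncomputable def ballsB {Ω : Type*} (X : ℕ → Ω → ℕ) (c : ℕ) (ω : Ω) : ℕ :=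
  sInf {b : ℕ | c ≤ collisions X b ω}

/-- The uniform distribution on the bins `{1, …, n}`, as a measure on `ℕ`. -/
noncomputable def unifBins (n : ℕ) : Measure ℕ :=
  ((n : ℝ≥0∞))⁻¹ • ∑ k ∈ Finset.Icc 1 n, Measure.dirac k

open Finset Real

namespace Function

variable {ι α : Type*} [Fintype ι] [LinearOrder ι] [DecidableEq α]

def repeatIndices (x : ι → α) : Finset ι :=
  {i | ∃ j < i, x j = x i}

noncomputable def firstIndex (x : ι → α) (i : ι) : ι :=
  ({j | x j = x i} : Finset ι).min' ⟨i, by simp⟩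

lemma apply_firstIndex (x : ι → α) (i : ι) : x (firstIndex x i) = x i :=
  (mem_filter.1 (min'_mem ({j | x j = x i} : Finset ι) ⟨i, by simp⟩)).2

lemma firstIndex_le_of_apply_eq (x : ι → α) {i j : ι} (h : x j = x i) : firstIndex x i ≤ j :=
  min'_le _ _ (by simpa using h)

lemma firstIndex_notMem_repeatIndices (x : ι → α) (i : ι) :
    firstIndex x i ∉ repeatIndices x := by
  simp only [repeatIndices, mem_filter, mem_univ, true_and, not_exists, not_and]
  intro j hj hx
  exact (firstIndex_le_of_apply_eq x (hx.trans (apply_firstIndex x i))).not_gt hj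

lemma injOn_compl_repeatIndices (x : ι → α) : Set.InjOn x ↑(repeatIndices x)ᶜ := by
  intro i hi j hj hij
  simp only [coe_compl, Set.mem_compl_iff, mem_coe, repeatIndices, mem_filter, mem_univ,
    true_and, not_exists, not_and] at hi hj
  rcases lt_trichotomy i j with h | h | h
  · exact absurd hij (hj i h)
  · exact h
  · exact absurd hij.symm (hi j h)

lemma card_image_add_card_repeatIndices (x : ι → α) :
    #(univ.image x) + #(repeatIndices x) = Fintype.card ι := by
  have himage : univ.image x = (repeatIndices x)ᶜ.image x := by
    refine (image_subset_image (subset_univ _)).antisymm' fun a ha => ?_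
    obtain ⟨i, -, rfl⟩ := mem_image.1 ha
    exact mem_image.2 ⟨firstIndex x i, mem_compl.2 (firstIndex_notMem_repeatIndices x i),
      apply_firstIndex x i⟩
  rw [himage, card_image_of_injOn (injOn_compl_repeatIndices x), card_compl_add_card]

lemma eq_of_firstIndex_eq_of_eqOn_compl {x y : ι → α}
    (hfirst : ∀ i ∈ repeatIndices x, firstIndex x i = firstIndex y i)
    (hcompl : ∀ i ∉ repeatIndices x, x i = y i) : x = y := by
  funext i
  by_cases hi : i ∈ repeatIndices x
  · calc x i = x (firstIndex x i) := (apply_firstIndex x i).symm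
      _ = y (firstIndex y i) := by
        rw [← hfirst i hi, hcompl _ (firstIndex_notMem_repeatIndices x i)]
      _ = y i := apply_firstIndex y i
  · exact hcompl i hi

lemma card_filter_repeatIndices_eq_le (s : Finset α) (R : Finset ι) :
    #{x ∈ Fintype.piFinset (fun _ : ι => s) | repeatIndices x = R} ≤
      Fintype.card ι ^ #R * (#s).descFactorial (Fintype.card ι - #R) := by
  set F := {x ∈ Fintype.piFinset (fun _ : ι => s) | repeatIndices x = R}
  have hmem {x : ι → α} (hx : x ∈ F) : (∀ i, x i ∈ s) ∧ repeatIndices x = R := by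
    simpa [F] using hx
  let encode : F → (R → ι) × (↥Rᶜ ↪ s) := fun x =>
    (fun i => firstIndex x.1 i,
      ⟨fun i => ⟨x.1 i, (hmem x.2).1 i⟩, fun i j hij => Subtype.ext <|
        injOn_compl_repeatIndices x.1 (by simpa [(hmem x.2).2] using mem_compl.1 i.2)
          (by simpa [(hmem x.2).2] using mem_compl.1 j.2) (congrArg Subtype.val hij)⟩)
  have hencode : Injective encode := by
    intro x y hxy
    simp only [encode, Prod.mk.injEq] at hxy
    refine Subtype.ext (eq_of_firstIndex_eq_of_eqOn_compl (fun i hi => ?_) fun i hi => ?_)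
    · rw [(hmem x.2).2] at hi
      exact congrFun hxy.1 ⟨i, hi⟩
    · rw [(hmem x.2).2] at hi
      exact congrArg Subtype.val (DFunLike.congr_fun hxy.2 ⟨i, mem_compl.2 hi⟩)
  simpa [Fintype.card_embedding_eq, card_compl] using Fintype.card_le_of_injective _ hencode

lemma card_filter_card_repeatIndices_lt_le (s : Finset α) (c : ℕ) :
    #{x ∈ Fintype.piFinset (fun _ : ι => s) | #(repeatIndices x) < c} ≤
      ∑ j ∈ range c, (Fintype.card ι).choose j *
        (Fintype.card ι ^ j * (#s).descFactorial (Fintype.card ι - j)) := by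
  rw [card_eq_sum_card_fiberwise (f := fun x => #(repeatIndices x)) (t := range c)
    fun x hx => by simpa using (mem_filter.1 hx).2]
  refine sum_le_sum fun j _ => ?_
  rw [filter_filter]
  refine (card_le_mul_card_image_of_maps_to (f := repeatIndices) (t := powersetCard j univ)
    (fun x hx => mem_powersetCard.2 ⟨subset_univ _, (mem_filter.1 hx).2.2⟩) _
    fun R hR => ?_).trans_eq (by rw [card_powersetCard, card_univ, mul_comm])
  rw [← (mem_powersetCard.1 hR).2, filter_filter]
  refine (card_le_card fun x hx => ?_).trans (card_filter_repeatIndices_eq_le s R)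
  simp only [mem_filter] at hx ⊢
  exact ⟨hx.1, hx.2.2⟩

end Function

open Function

lemma collisions_eq_card_repeatIndices {Ω : Type*} (X : ℕ → Ω → ℕ) (b : ℕ) (ω : Ω) :
    collisions X b ω = #(repeatIndices fun i : Fin b => X i ω) := by
  have := card_image_add_card_repeatIndices fun i : Fin b => X i ω
  rw [Fintype.card_fin] at this
  rw [collisions, ← image_fin_univ, image_image]
  exact Nat.sub_eq_of_eq_add' this.symm

lemma setOf_lt_ballsB_div_subset {Ω : Type*} (X : ℕ → Ω → ℕ) (c n : ℕ) (t : ℝ) :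
    {ω | √t < (ballsB X c ω : ℝ) / √(2 * c * n)} ⊆
      {ω | collisions X ⌊√(2 * c * n * t)⌋₊ ω < c} := by
  intro ω hω
  change collisions X _ ω < c
  by_contra! hcoll
  have hB : ballsB X c ω ≤ ⌊√(2 * c * n * t)⌋₊ := Nat.sInf_le hcoll
  refine hω.not_ge (div_le_of_le_mul₀ (sqrt_nonneg _) (sqrt_nonneg _) ?_)
  calc (ballsB X c ω : ℝ) ≤ ⌊√(2 * c * n * t)⌋₊ := by exact_mod_cast hB
    _ ≤ √(2 * c * n * t) := Nat.floor_le (sqrt_nonneg _)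
    _ = √t * √(2 * c * n) := by rw [sqrt_mul (by positivity), mul_comm]

lemma unifBins_singleton {n k : ℕ} (hk : k ∈ Icc 1 n) : unifBins n {k} = (n : ℝ≥0∞)⁻¹ := by
  simp [unifBins, Measure.finsetSum_apply, hk]

lemma ae_unifBins_mem_Icc (n : ℕ) : ∀ᵐ k ∂unifBins n, k ∈ Icc 1 n := by
  simp [unifBins, ae_iff, Measure.finsetSum_apply]

lemma measure_setOf_le_card_filter_mul {Ω ι : Type*} [MeasurableSpace Ω] {μ : Measure Ω}
    [Fintype ι] [DecidableEq ι] {n : ℕ} {Y : ι → Ω → ℕ} (hmeas : ∀ i, Measurable (Y i))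
    (hindep : iIndepFun Y μ) (hunif : ∀ i, μ.map (Y i) = unifBins n)
    (p : (ι → ℕ) → Prop) [DecidablePred p] :
    μ {ω | p fun i => Y i ω} ≤
      #{x ∈ Fintype.piFinset (fun _ : ι => Icc 1 n) | p x} * (n : ℝ≥0∞)⁻¹ ^ Fintype.card ι := by
  have hcylinder : ∀ x ∈ Fintype.piFinset (fun _ : ι => Icc 1 n),
      μ (⋂ i, Y i ⁻¹' {x i}) = (n : ℝ≥0∞)⁻¹ ^ Fintype.card ι := by
    intro x hx
    have := hindep.measure_inter_preimage_eq_mul univ (sets := fun i => {x i})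
      fun _ _ => .singleton _
    simp only [mem_univ, Set.iInter_true] at this
    rw [this, ← card_univ, ← prod_const]
    refine prod_congr rfl fun i _ => ?_
    rw [← Measure.map_apply (hmeas i) (.singleton _), hunif,
      unifBins_singleton (Fintype.mem_piFinset.1 hx i)]
  have hae : ∀ᵐ ω ∂μ, ∀ i, Y i ω ∈ Icc 1 n := ae_all_iff.2 fun i =>
    ae_of_ae_map (hmeas i).aemeasurable (hunif i ▸ ae_unifBins_mem_Icc n)
  set S := {x ∈ Fintype.piFinset (fun _ : ι => Icc 1 n) | p x}
  calc μ {ω | p fun i => Y i ω}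
      ≤ μ (⋃ x ∈ S, ⋂ i, Y i ⁻¹' {x i}) := by
        refine measure_mono_ae ?_
        filter_upwards [hae] with ω hω hp
        change ω ∈ ⋃ x ∈ S, _
        simp only [Set.mem_iUnion, Set.mem_iInter, Set.mem_preimage, Set.mem_singleton_iff]
        exact ⟨fun i => Y i ω, mem_filter.2 ⟨Fintype.mem_piFinset.2 hω, hp⟩, fun _ => rfl⟩
    _ ≤ ∑ x ∈ S, μ (⋂ i, Y i ⁻¹' {x i}) := measure_biUnion_finset_le _ _
    _ = _ := by
        rw [sum_congr rfl fun x hx => hcylinder x (mem_filter.1 hx).1, sum_const, nsmul_eq_mul]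

lemma measure_collisions_lt_le {Ω : Type*} [MeasurableSpace Ω] {μ : Measure Ω} {n : ℕ}
    {X : ℕ → Ω → ℕ} (hmeas : ∀ i, Measurable (X i)) (hindep : iIndepFun X μ)
    (hunif : ∀ i, μ.map (X i) = unifBins n) (b c : ℕ) :
    μ {ω | collisions X b ω < c} ≤
      #{x ∈ Fintype.piFinset (fun _ : Fin b => Icc 1 n) | #(repeatIndices x) < c} *
        (n : ℝ≥0∞)⁻¹ ^ b := by
  simp_rw [collisions_eq_card_repeatIndices]
  simpa using measure_setOf_le_card_filter_mul (Y := fun i : Fin b => X i) (fun i => hmeas i)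
    (hindep.precomp Fin.val_injective) (fun i => hunif i) fun x => #(repeatIndices x) < c

lemma Nat.descFactorial_le_pow_mul_exp (n m : ℕ) :
    (n.descFactorial m : ℝ) ≤ n ^ m * exp (-(m * (m - 1) / (2 * n))) := by
  have hsum (k : ℕ) : ∑ i ∈ range k, (i : ℝ) = k * (k - 1) / 2 := by
    induction k with
    | zero => simp
    | succ k ih => rw [sum_range_succ, ih]; push_cast; ring
  rcases lt_or_ge n m with hnm | hmn
  · rw [Nat.descFactorial_eq_zero_iff_lt.2 hnm, Nat.cast_zero]
    positivity
  rw [Nat.descFactorial_eq_prod_range, Nat.cast_prod]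
  calc ∏ i ∈ range m, ((n - i : ℕ) : ℝ)
      ≤ ∏ i ∈ range m, (n * exp (-(i / n)) : ℝ) := by
        refine prod_le_prod (fun _ _ => Nat.cast_nonneg _) fun i hi => ?_
        have hin : i < n := (mem_range.1 hi).trans_le hmn
        have hn : (0 : ℝ) < n := by exact_mod_cast (Nat.zero_le i).trans_lt hin
        rw [Nat.cast_sub hin.le]
        calc (n - i : ℝ) = n * (1 - i / n) := by field_simp
          _ ≤ n * exp (-(i / n)) := by gcongr; exact one_sub_le_exp_neg _
    _ = n ^ m * exp (-(m * (m - 1) / (2 * n))) := by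
        rw [prod_mul_distrib, prod_const, card_range, ← exp_sum, sum_neg_distrib, ← sum_div,
          hsum, div_div, mul_comm (2 : ℝ)]

lemma choose_mul_pow_mul_descFactorial_div_le {n b j : ℕ} (hn : 0 < n) (hj : j ≤ b) :
    (b.choose j * (b ^ j * n.descFactorial (b - j)) : ℝ) / n ^ b ≤
      ((b : ℝ) ^ 2 / n) ^ j / j.factorial *
        exp (-((b - j : ℕ) * ((b - j : ℕ) - 1) / (2 * n))) := by
  have hn' : (0 : ℝ) < n := by exact_mod_cast hn
  have hsplit : (n : ℝ) ^ b = n ^ j * n ^ (b - j) := by rw [← pow_add, Nat.add_sub_cancel' hj]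
  calc (b.choose j * (b ^ j * n.descFactorial (b - j)) : ℝ) / n ^ b
      ≤ (b ^ j / j.factorial * (b ^ j * (n ^ (b - j) *
          exp (-((b - j : ℕ) * ((b - j : ℕ) - 1) / (2 * n)))))) / n ^ b := by
        gcongr
        · exact Nat.choose_le_pow_div j b
        · exact Nat.descFactorial_le_pow_mul_exp n (b - j)
    _ = _ := by
        rw [hsplit, div_pow]
        field_simp
        ring

section CollisionBound

variable {n c j : ℕ} {t : ℝ}

lemma two_mul_pow_div_factorial_le (hjc : j ≤ c) (ht : 37 ≤ t) :
    (2 * c * t) ^ j / j.factorial ≤ exp (5 / 32 * (c * t)) := by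
  have h32 : (32 : ℝ) ≤ exp (3 * t / 32) := by
    rw [← log_le_iff_le_exp (by norm_num), show (32 : ℝ) = 2 ^ 5 by norm_num, log_pow]
    linarith [log_two_lt_d9]
  calc (2 * c * t) ^ j / j.factorial = 32 ^ j * ((c * t / 16) ^ j / j.factorial) := by
        rw [mul_div_assoc', ← mul_pow]; ring
    _ ≤ 32 ^ c * exp (c * t / 16) := by
        gcongr
        · norm_num
        · exact pow_div_factorial_le_exp _ (by positivity) j
    _ ≤ exp (3 * t / 32) ^ c * exp (c * t / 16) := by gcongr
    _ = exp (5 / 32 * (c * t)) := by rw [← exp_nat_mul, ← exp_add]; ring_nf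

lemma four_mul_le_floor_sqrt (hnt : 8 * c ≤ n * t) : 4 * c ≤ ⌊√(2 * c * n * t)⌋₊ := by
  have hc : (0 : ℝ) ≤ c := Nat.cast_nonneg c
  refine Nat.le_floor ?_
  rw [le_sqrt (by positivity) (by nlinarith)]
  push_cast
  nlinarith

lemma sqrt_le_mul_div_two (hnt : 8 * c ≤ n * t) : √(2 * c * n * t) ≤ n * t / 2 := by
  have hc : (0 : ℝ) ≤ c := Nat.cast_nonneg c
  rw [sqrt_le_left (by linarith)]
  nlinarith

lemma sq_floor_sqrt_div_le (ht : 0 ≤ t) : (⌊√(2 * c * n * t)⌋₊ : ℝ) ^ 2 / n ≤ 2 * c * t := by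
  rcases (Nat.cast_nonneg n : (0 : ℝ) ≤ n).eq_or_lt with hn | hn
  · rw [← hn, div_zero]; positivity
  rw [div_le_iff₀ hn]
  calc (⌊√(2 * c * n * t)⌋₊ : ℝ) ^ 2 ≤ √(2 * c * n * t) ^ 2 := by
        gcongr; exact Nat.floor_le (sqrt_nonneg _)
    _ = 2 * c * t * n := by rw [sq_sqrt (by positivity)]; ring

lemma nine_div_thirtyTwo_mul_le (hn : 0 < n) (hjc : j < c) (hnt : 8 * c ≤ n * t) :
    9 / 32 * (c * t) ≤
      (⌊√(2 * c * n * t)⌋₊ - j : ℕ) * ((⌊√(2 * c * n * t)⌋₊ - j : ℕ) - 1) / (2 * n) := by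
  set s := √(2 * c * n * t)
  set b := ⌊s⌋₊
  have hc : (1 : ℝ) ≤ c := by exact_mod_cast (Nat.zero_le j).trans_lt hjc
  have hjc' : (j : ℝ) + 1 ≤ c := by exact_mod_cast hjc
  have hn : (0 : ℝ) < n := by exact_mod_cast hn
  have hs2 : s ^ 2 = 2 * c * n * t := sq_sqrt (by nlinarith)
  have hs : s ≤ n * t / 2 := sqrt_le_mul_div_two hnt
  have hbs : s - 1 ≤ b := by linarith [Nat.lt_floor_add_one s]
  have hb4c : 4 * (c : ℝ) ≤ b := by
    rw [← Nat.cast_ofNat, ← Nat.cast_mul, Nat.cast_le]; exact four_mul_le_floor_sqrt hnt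
  have hm : (b : ℝ) - c + 1 ≤ (b - j : ℕ) := by
    rw [Nat.cast_sub (by exact_mod_cast (show (j : ℝ) ≤ b by linarith))]; linarith
  have hmm : 9 / 16 * (b : ℝ) ^ 2 ≤ (b - j : ℕ) * ((b - j : ℕ) - 1) := by nlinarith
  have hb2 : c * n * t ≤ (b : ℝ) ^ 2 := by
    have hs1 : (s - 1) ^ 2 ≤ (b : ℝ) ^ 2 :=
      pow_le_pow_left₀ (by linarith [Nat.floor_le (sqrt_nonneg (2 * c * n * t))]) hbs 2
    nlinarith
  rw [le_div_iff₀ (by positivity)]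
  nlinarith

lemma choose_mul_pow_mul_descFactorial_div_le_exp (hn : 0 < n) (hjc : j < c)
    (hnt : 8 * c ≤ n * t) (ht : 37 ≤ t) :
    ((⌊√(2 * c * n * t)⌋₊.choose j *
        (⌊√(2 * c * n * t)⌋₊ ^ j * n.descFactorial (⌊√(2 * c * n * t)⌋₊ - j)) : ℕ) : ℝ) /
      n ^ ⌊√(2 * c * n * t)⌋₊ ≤ exp (-(c * t) / 8) := by
  have hjb : j ≤ ⌊√(2 * c * n * t)⌋₊ := by linarith [four_mul_le_floor_sqrt hnt]
  push_cast
  calc _ ≤ _ := choose_mul_pow_mul_descFactorial_div_le hn hjb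
    _ ≤ (2 * c * t) ^ j / j.factorial * exp (-(9 / 32 * (c * t))) := by
        gcongr
        · exact sq_floor_sqrt_div_le (by linarith)
        · exact nine_div_thirtyTwo_mul_le hn hjc hnt
    _ ≤ exp (5 / 32 * (c * t)) * exp (-(9 / 32 * (c * t))) := by
        gcongr; exact two_mul_pow_div_factorial_le hjc.le ht
    _ = exp (-(c * t) / 8) := by rw [← exp_add]; ring_nf

end CollisionBound

theorem stmt_8_general {Ω : Type*} [MeasurableSpace Ω] (μ : Measure Ω)
    (K : ℝ) (n c : ℕ) (hn : 1 ≤ n) (hcK : (c : ℝ) ≤ K * n)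
    (t : ℝ) (ht : max (8 * K) 44 < t)
    (X : ℕ → Ω → ℕ) (hmeas : ∀ i, Measurable (X i))
    (hindep : iIndepFun X μ)
    (hunif : ∀ i, μ.map (X i) = unifBins n) :
    (μ {ω | Real.sqrt t < (ballsB X c ω : ℝ) / Real.sqrt (2 * c * n)}).toReal ≤
      (c : ℝ) * Real.exp (-(c * t) / 8) := by
  have hnt : 8 * c ≤ n * t := by
    nlinarith [le_max_left (8 * K) 44, (Nat.cast_nonneg n : (0 : ℝ) ≤ n)]
  have ht37 : 37 ≤ t := by linarith [le_max_right (8 * K) 44]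
  set b := ⌊√(2 * c * n * t)⌋₊
  calc (μ {ω | √t < (ballsB X c ω : ℝ) / √(2 * c * n)}).toReal
      ≤ (#{x ∈ Fintype.piFinset (fun _ : Fin b => Icc 1 n) | #(repeatIndices x) < c} *
          (n : ℝ≥0∞)⁻¹ ^ b).toReal :=
        ENNReal.toReal_mono (by finiteness) <|
          (measure_mono (setOf_lt_ballsB_div_subset X c n t)).trans
            (measure_collisions_lt_le hmeas hindep hunif b c)
    _ ≤ ((∑ j ∈ range c, b.choose j * (b ^ j * n.descFactorial (b - j)) : ℕ) : ℝ) / n ^ b := by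
        simp only [ENNReal.toReal_mul, ENNReal.toReal_pow, ENNReal.toReal_inv,
          ENNReal.toReal_natCast, inv_pow, ← div_eq_mul_inv]
        gcongr
        simpa using card_filter_card_repeatIndices_lt_le (Icc 1 n) c (ι := Fin b)
    _ ≤ ∑ _j ∈ range c, exp (-(c * t) / 8) := by
        rw [Nat.cast_sum, sum_div]
        exact sum_le_sum fun j hj =>
          choose_mul_pow_mul_descFactorial_div_le_exp hn (mem_range.1 hj) hnt ht37
    _ = c * exp (-(c * t) / 8) := by rw [sum_const, card_range, nsmul_eq_mul]

theorem stmt_8 {Ω : Type*} [MeasurableSpace Ω] (μ : Measure Ω) [IsProbabilityMeasure μ]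
    (K : ℝ) (hK : 0 < K) (n c : ℕ) (hn : 1 ≤ n) (hc : 1 ≤ c) (hcK : (c : ℝ) ≤ K * n)
    (t : ℝ) (ht : max (8 * K) 44 < t)
    (X : ℕ → Ω → ℕ) (hmeas : ∀ i, Measurable (X i))
    (hindep : iIndepFun X μ)
    (hunif : ∀ i, μ.map (X i) = unifBins n) :
    (μ {ω | Real.sqrt t < (ballsB X c ω : ℝ) / Real.sqrt (2 * c * n)}).toReal ≤
      (c : ℝ) * Real.exp (-(c * t) / 8) :=
  stmt_8_general μ K n c hn hcK t ht X hmeas hindep hunif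
end

section
/- In the balls-in-bins model, let b, n ≥ 1 be integers, set μ := E[C(b,n)], and suppose μ > 0. Then for every t > 0: P(C(b,n) − μ ≤ −t) ≤ exp(−t²/(2μ)) and P(C(b,n) − μ ≥ t) ≤ exp(−t²/(2μ + t)). -/
/-!
Conditionally on the first `k` throws, the next ball collides with probability
`(k - C(k,n)) / n`, so `E exp (l C(k+1,n)) = E [exp (l C(k,n)) g (C(k,n))]` with
`g c = 1 + (exp l - 1) (k - c) / n`. As `g` is affine and varies in the opposite direction to
`c ↦ exp (l c)`, Chebyshev's association inequality bounds this by
`E exp (l C(k,n)) * g (E C(k,n)) ≤ E exp (l C(k,n)) * exp (g (E C(k,n)) - 1)`. Since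
`E C(k+1,n) = E C(k,n) + (k - E C(k,n)) / n`, induction on `k` bounds the moment generating
function of `C(b,n)` by the Poisson one, `exp (m (exp l - 1))` with `m = E C(b,n)`. The two tails
then follow from the Chernoff bound at `l = -t/m` and `l = 2t/(2m + t)`, using
`exp (-x) ≤ 1 - x + x²/2` and `(2 - x) exp x ≤ 2 + x` for `x ≥ 0`.
-/

open MeasureTheory ProbabilityTheory Filter Topology
open scoped ENNReal NNReal

open Real Finset

lemma nonneg_of_hasDerivAt_nonneg {f f' : ℝ → ℝ} (hf : ∀ x, HasDerivAt f (f' x) x)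
    (hf₀ : f 0 = 0) (hf' : ∀ x, 0 < x → 0 ≤ f' x) {x : ℝ} (hx : 0 ≤ x) : 0 ≤ f x := by
  have hmono : MonotoneOn f (Set.Ici 0) :=
    monotoneOn_of_hasDerivWithinAt_nonneg (convex_Ici 0)
      (continuous_iff_continuousAt.2 fun x => (hf x).continuousAt).continuousOn
      (fun x _ => (hf x).hasDerivWithinAt) (fun x hx => hf' x (by simpa using hx))
  simpa [hf₀] using hmono Set.self_mem_Ici hx hx

namespace Real

lemma exp_neg_le_one_sub_add_sq_div_two {x : ℝ} (hx : 0 ≤ x) :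
    exp (-x) ≤ 1 - x + x ^ 2 / 2 := by
  have hderiv (y : ℝ) : HasDerivAt (fun y => 1 - y + y ^ 2 / 2 - exp (-y))
      (-1 + y + exp (-y)) y :=
    ((((hasDerivAt_id y).const_sub 1).add ((hasDerivAt_pow 2 y).div_const 2)).sub
      (hasDerivAt_id y).neg.exp).congr_deriv (by simp)
  have := nonneg_of_hasDerivAt_nonneg hderiv (by simp)
    (fun y _ => by linarith [add_one_le_exp (-y)]) hx
  linarith

lemma two_sub_mul_exp_le_two_add {x : ℝ} (hx : 0 ≤ x) : (2 - x) * exp x ≤ 2 + x := by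
  have hderiv (y : ℝ) : HasDerivAt (fun y => 2 + y - (2 - y) * exp y)
      (1 - (1 - y) * exp y) y :=
    (((hasDerivAt_id y).const_add 2).sub
      (((hasDerivAt_id y).const_sub 2).mul (hasDerivAt_exp y))).congr_deriv (by simp; ring)
  have hle (y : ℝ) : (1 - y) * exp y ≤ 1 := by
    have := mul_le_mul_of_nonneg_right (add_one_le_exp (-y)) (exp_pos y).le
    rwa [← exp_add, neg_add_cancel, exp_zero, neg_add_eq_sub] at this
  have := nonneg_of_hasDerivAt_nonneg hderiv (by simp) (fun y _ => by linarith [hle y]) hx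
  linarith

end Real

section Probability

variable {Ω : Type*} [MeasurableSpace Ω] {μ : Measure Ω} [IsProbabilityMeasure μ]

lemma integral_mul_le_of_antivary {f g : ℝ → ℝ} {Y : Ω → ℝ} (hfg : Antivary f g)
    (hf : Integrable (fun ω => f (Y ω)) μ) (hg : Integrable (fun ω => g (Y ω)) μ)
    (hfg_int : Integrable (fun ω => f (Y ω) * g (Y ω)) μ)
    (hg_mean : ∫ ω, g (Y ω) ∂μ = g (∫ ω, Y ω ∂μ)) :
    ∫ ω, f (Y ω) * g (Y ω) ∂μ ≤ (∫ ω, f (Y ω) ∂μ) * g (∫ ω, Y ω ∂μ) := by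
  set m := ∫ ω, Y ω ∂μ
  have hpoint (x : ℝ) : f x * g x ≤ f x * g m + f m * (g x - g m) := by
    linarith [hfg.sub_mul_sub_nonpos x m]
  have hcorr : Integrable (fun ω => f m * (g (Y ω) - g m)) μ :=
    (hg.sub (integrable_const _)).const_mul _
  calc ∫ ω, f (Y ω) * g (Y ω) ∂μ
      ≤ ∫ ω, f (Y ω) * g m + f m * (g (Y ω) - g m) ∂μ :=
        integral_mono hfg_int ((hf.mul_const _).add hcorr) fun ω => hpoint (Y ω)
    _ = (∫ ω, f (Y ω) ∂μ) * g m := by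
        rw [integral_add (hf.mul_const _) hcorr,
          integral_const_mul, integral_sub hg (integrable_const _), hg_mean, integral_mul_const]
        simp

variable {Y : Ω → ℝ} {m t : ℝ}

lemma measure_sub_le_neg_le_of_mgf_le_poisson (hm : 0 < m)
    (hint : ∀ s, Integrable (fun ω => exp (s * Y ω)) μ)
    (hmgf : ∀ s, mgf Y μ s ≤ exp (m * (exp s - 1))) (ht : 0 < t) :
    μ.real {ω | Y ω - m ≤ -t} ≤ exp (-t ^ 2 / (2 * m)) := by
  set u := t / m
  have hu : 0 ≤ u := by positivity
  have hexponent : u * (-t + m) + m * (exp (-u) - 1) ≤ -t ^ 2 / (2 * m) :=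
    calc u * (-t + m) + m * (exp (-u) - 1) ≤ u * (-t + m) + m * (-u + u ^ 2 / 2) := by
          gcongr; linarith [exp_neg_le_one_sub_add_sq_div_two hu]
      _ = -t ^ 2 / (2 * m) := by simp only [u]; field_simp; ring
  calc μ.real {ω | Y ω - m ≤ -t} = μ.real {ω | Y ω ≤ -t + m} := by
        simp_rw [sub_le_iff_le_add]
    _ ≤ exp (-(-u) * (-t + m)) * mgf Y μ (-u) :=
        measure_le_le_exp_mul_mgf _ (neg_nonpos.2 hu) (hint _)
    _ ≤ exp (u * (-t + m)) * exp (m * (exp (-u) - 1)) := by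
        rw [neg_neg]; gcongr; exact hmgf _
    _ ≤ exp (-t ^ 2 / (2 * m)) := by rw [← exp_add]; exact exp_le_exp.2 hexponent

lemma measure_le_sub_le_of_mgf_le_poisson (hm : 0 ≤ m)
    (hint : ∀ s, Integrable (fun ω => exp (s * Y ω)) μ)
    (hmgf : ∀ s, mgf Y μ s ≤ exp (m * (exp s - 1))) (ht : 0 < t) :
    μ.real {ω | t ≤ Y ω - m} ≤ exp (-t ^ 2 / (2 * m + t)) := by
  have hD : 0 < 2 * m + t := by positivity
  set v := 2 * t / (2 * m + t)
  have hv : 0 ≤ v := by positivity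
  -- the choice of `v` turns `(2 - v) * exp v ≤ 2 + v` into `m * exp v ≤ m + t`
  have hpade : m * exp v ≤ m + t := by
    have h := two_sub_mul_exp_le_two_add hv
    rw [show 2 - v = 4 * m / (2 * m + t) by simp only [v]; field_simp; ring,
      show 2 + v = 4 * (m + t) / (2 * m + t) by simp only [v]; field_simp; ring,
      div_mul_eq_mul_div, div_le_div_iff_of_pos_right hD] at h
    linarith
  have hexponent : -v * (t + m) + m * (exp v - 1) ≤ -t ^ 2 / (2 * m + t) :=
    calc -v * (t + m) + m * (exp v - 1) ≤ -v * (t + m) + t := by linarith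
      _ = -t ^ 2 / (2 * m + t) := by simp only [v]; field_simp; ring
  calc μ.real {ω | t ≤ Y ω - m} = μ.real {ω | t + m ≤ Y ω} := by
        simp_rw [le_sub_iff_add_le]
    _ ≤ exp (-v * (t + m)) * mgf Y μ v := measure_ge_le_exp_mul_mgf _ hv (hint _)
    _ ≤ exp (-v * (t + m)) * exp (m * (exp v - 1)) := by gcongr; exact hmgf _
    _ ≤ exp (-t ^ 2 / (2 * m + t)) := by rw [← exp_add]; exact exp_le_exp.2 hexponent

end Probability

lemma integral_unifBins (n : ℕ) (f : ℕ → ℝ) :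
    ∫ y, f y ∂unifBins n = (n : ℝ)⁻¹ * ∑ y ∈ Icc 1 n, f y := by
  simp [unifBins, integral_smul_measure,
    integral_finsetSum_measure fun _ _ => integrable_dirac enorm_lt_top]

lemma unifBins_compl_Icc (n : ℕ) : unifBins n (↑(Icc 1 n))ᶜ = 0 := by
  simp [unifBins]

lemma sum_Icc_ite_mem {n : ℕ} {S : Finset ℕ} (hS : S ⊆ Icc 1 n) (u v : ℝ) :
    ∑ y ∈ Icc 1 n, (if y ∈ S then u else v) = S.card * u + (n - S.card) * v := by
  rw [sum_ite, sum_const, sum_const, filter_mem_eq_inter, inter_eq_right.2 hS,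
    ← sdiff_eq_filter, card_sdiff_of_subset hS, Nat.card_Icc, nsmul_eq_mul, nsmul_eq_mul,
    Nat.cast_sub (by simpa using card_le_card hS)]
  simp

section Collisions

variable {Ω : Type*} {X : ℕ → Ω → ℕ}

def firstThrows (X : ℕ → Ω → ℕ) (k : ℕ) (ω : Ω) : range k → ℕ := fun i => X i ω

lemma image_firstThrows (k : ℕ) (ω : Ω) :
    univ.image (firstThrows X k ω) = (range k).image (X · ω) := by
  ext y; simp [firstThrows]

lemma collisions_add_card (k : ℕ) (ω : Ω) :
    collisions X k ω + ((range k).image (X · ω)).card = k :=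
  Nat.sub_add_cancel (card_image_le.trans (card_range k).le)

lemma collisions_succ (k : ℕ) (ω : Ω) :
    collisions X (k + 1) ω =
      collisions X k ω + if X k ω ∈ (range k).image (X · ω) then 1 else 0 := by
  have := collisions_add_card (X := X) k ω
  unfold collisions at *
  rw [range_add_one, image_insert]
  split_ifs with h
  · rw [insert_eq_self.2 h]; omega
  · rw [card_insert_of_notMem h]; omega

variable [MeasurableSpace Ω] {μ : Measure Ω} {n : ℕ}

lemma measurable_firstThrows (hX : ∀ i, Measurable (X i)) (k : ℕ) :
    Measurable (firstThrows X k) :=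
  measurable_pi_lambda _ fun i => hX i

lemma indepFun_firstThrows (hX : ∀ i, Measurable (X i)) (hindep : iIndepFun X μ) (k : ℕ) :
    IndepFun (firstThrows X k) (X k) μ :=
  (hindep.indepFun_finset (range k) {k} (by simp) hX).comp measurable_id
    (measurable_pi_apply (⟨k, mem_singleton_self k⟩ : ({k} : Finset ℕ)))

lemma measurable_collisions (hX : ∀ i, Measurable (X i)) (k : ℕ) :
    Measurable (collisions X k) := by
  have : collisions X k = (fun a => k - (univ.image a).card) ∘ firstThrows X k := by
    funext ω; rw [Function.comp_apply, image_firstThrows]; rfl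
  rw [this]
  exact (measurable_of_countable _).comp (measurable_firstThrows hX k)

lemma ae_forall_mem_Icc_of_map_eq_unifBins (hX : ∀ i, Measurable (X i))
    (hunif : ∀ i, μ.map (X i) = unifBins n) : ∀ᵐ ω ∂μ, ∀ i, X i ω ∈ Icc 1 n := by
  refine ae_all_iff.2 fun i => ?_
  have := Measure.map_apply (μ := μ) (hX i) (MeasurableSet.of_discrete (s := (↑(Icc 1 n))ᶜ))
  rw [hunif i, unifBins_compl_Icc] at this
  simpa using measure_eq_zero_iff_ae_notMem.1 this.symm

variable [IsProbabilityMeasure μ]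

lemma integrable_comp_collisions (hX : ∀ i, Measurable (X i)) (F : ℕ → ℝ) (k : ℕ) :
    Integrable (fun ω => F (collisions X k ω)) μ :=
  .of_bound ((measurable_of_countable F).comp (measurable_collisions hX k)).aestronglyMeasurable
    (∑ j ∈ range (k + 1), |F j|) <| ae_of_all _ fun _ =>
      single_le_sum (f := fun j => |F j|) (fun _ _ => abs_nonneg _)
        (mem_range.2 (Nat.lt_succ_of_le (Nat.sub_le _ _)))

lemma integral_comp_of_indepFun_unifBins {α : Type*} [MeasurableSpace α] [Countable α]
    [MeasurableSingletonClass α] {Y : Ω → α} {Z : Ω → ℕ} (hY : Measurable Y) (hZ : Measurable Z)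
    (hYZ : IndepFun Y Z μ) (hZunif : μ.map Z = unifBins n) (H : α → ℕ → ℝ) {M : ℝ}
    (hH : ∀ a y, |H a y| ≤ M) :
    ∫ ω, H (Y ω) (Z ω) ∂μ = ∫ ω, (n : ℝ)⁻¹ * ∑ y ∈ Icc 1 n, H (Y ω) y ∂μ := by
  have hprod := (indepFun_iff_map_prod_eq_prod_map_map hY.aemeasurable hZ.aemeasurable).1 hYZ
  have hint : Integrable (Function.uncurry H) ((μ.map Y).prod (μ.map Z)) :=
    .of_bound (measurable_of_countable _).aestronglyMeasurable M (ae_of_all _ fun p => hH _ _)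
  calc ∫ ω, H (Y ω) (Z ω) ∂μ = ∫ p, Function.uncurry H p ∂(μ.map fun ω => (Y ω, Z ω)) :=
        (integral_map (hY.prodMk hZ).aemeasurable
          (measurable_of_countable (Function.uncurry H)).aestronglyMeasurable).symm
    _ = ∫ a, ∫ y, H a y ∂unifBins n ∂(μ.map Y) := by rw [hprod, integral_prod _ hint, hZunif]; rfl
    _ = ∫ ω, (n : ℝ)⁻¹ * ∑ y ∈ Icc 1 n, H (Y ω) y ∂μ := by
        simp_rw [integral_unifBins]
        exact integral_map hY.aemeasurable (measurable_of_countable _).aestronglyMeasurable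

lemma integral_comp_collisions_succ (hX : ∀ i, Measurable (X i)) (hindep : iIndepFun X μ)
    (hunif : ∀ i, μ.map (X i) = unifBins n) (hn : 1 ≤ n) (F : ℕ → ℝ) (k : ℕ) :
    ∫ ω, F (collisions X (k + 1) ω) ∂μ =
      ∫ ω, (1 - (k - collisions X k ω : ℝ) / n) * F (collisions X k ω)
        + (k - collisions X k ω : ℝ) / n * F (collisions X k ω + 1) ∂μ := by
  let H (a : range k → ℕ) (y : ℕ) : ℝ :=
    F (k - (univ.image a).card + if y ∈ univ.image a then 1 else 0)
  have hH : ∀ a y, |H a y| ≤ ∑ j ∈ range (k + 2), |F j| := fun a y =>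
    single_le_sum (f := fun j => |F j|) (fun _ _ => abs_nonneg _)
      (mem_range.2 (by split_ifs <;> omega))
  have hsucc (ω : Ω) : F (collisions X (k + 1) ω) = H (firstThrows X k ω) (X k ω) := by
    simp only [H, image_firstThrows, collisions_succ]; rfl
  simp_rw [hsucc, integral_comp_of_indepFun_unifBins (measurable_firstThrows hX k) (hX k)
    (indepFun_firstThrows hX hindep k) (hunif k) H hH]
  refine integral_congr_ae ?_
  filter_upwards [ae_forall_mem_Icc_of_map_eq_unifBins hX hunif] with ω hω
  have hocc : (range k).image (X · ω) ⊆ Icc 1 n := by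
    simpa [subset_iff] using fun i _ => hω i
  have hcard : (((range k).image (X · ω)).card : ℝ) = k - collisions X k ω :=
    eq_sub_of_add_eq (by rw [add_comm]; exact_mod_cast collisions_add_card k ω)
  have hn' : (n : ℝ) ≠ 0 := by positivity
  simp only [H, image_firstThrows]
  change (n : ℝ)⁻¹ * ∑ y ∈ Icc 1 n,
    F (collisions X k ω + if y ∈ (range k).image (X · ω) then 1 else 0) = _
  simp_rw [add_ite, add_zero, apply_ite F]
  rw [sum_Icc_ite_mem hocc, hcard]
  field_simp
  ring

lemma integral_collisions_succ (hX : ∀ i, Measurable (X i)) (hindep : iIndepFun X μ)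
    (hunif : ∀ i, μ.map (X i) = unifBins n) (hn : 1 ≤ n) (k : ℕ) :
    ∫ ω, (collisions X (k + 1) ω : ℝ) ∂μ =
      ∫ ω, (collisions X k ω : ℝ) ∂μ + (k - ∫ ω, (collisions X k ω : ℝ) ∂μ) / n := by
  have hC := integrable_comp_collisions (μ := μ) hX Nat.cast k
  have hdev : Integrable (fun ω => (k - collisions X k ω : ℝ) / n) μ :=
    ((integrable_const _).sub hC).div_const _
  calc ∫ ω, (collisions X (k + 1) ω : ℝ) ∂μ
      = ∫ ω, (collisions X k ω + (k - collisions X k ω) / n : ℝ) ∂μ := by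
        rw [integral_comp_collisions_succ hX hindep hunif hn Nat.cast k]
        congr 1 with ω
        push_cast
        ring
    _ = _ := by
        rw [integral_add hC hdev, integral_div, integral_sub (integrable_const _) hC]
        simp

lemma mgf_collisions_succ (hX : ∀ i, Measurable (X i)) (hindep : iIndepFun X μ)
    (hunif : ∀ i, μ.map (X i) = unifBins n) (hn : 1 ≤ n) (l : ℝ) (k : ℕ) :
    mgf (fun ω => (collisions X (k + 1) ω : ℝ)) μ l =
      ∫ ω, exp (l * collisions X k ω) * (1 + (exp l - 1) * ((k - collisions X k ω) / n)) ∂μ := by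
  rw [mgf, integral_comp_collisions_succ hX hindep hunif hn (fun j => exp (l * j)) k]
  congr 1 with ω
  push_cast
  rw [mul_add, mul_one, exp_add]
  ring

lemma mgf_collisions_le (hX : ∀ i, Measurable (X i)) (hindep : iIndepFun X μ)
    (hunif : ∀ i, μ.map (X i) = unifBins n) (hn : 1 ≤ n) (l : ℝ) (k : ℕ) :
    mgf (fun ω => (collisions X k ω : ℝ)) μ l ≤
      exp ((∫ ω, (collisions X k ω : ℝ) ∂μ) * (exp l - 1)) := by
  induction k with
  | zero => simp [collisions, mgf]
  | succ k ih =>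
    set m := ∫ ω, (collisions X k ω : ℝ) ∂μ
    set g : ℝ → ℝ := fun x => 1 + (exp l - 1) * ((k - x) / n)
    have hanti : Antivary (fun x => exp (l * x)) g := by
      rcases le_total 0 l with hl | hl
      · refine Monotone.antivary (fun x y h => ?_) (fun x y h => ?_)
        · exact exp_le_exp.2 (mul_le_mul_of_nonneg_left h hl)
        · have : 0 ≤ exp l - 1 := by linarith [one_le_exp hl]
          simp only [g]; gcongr
      · refine Antitone.antivary (fun x y h => ?_) (fun x y h => ?_)
        · exact exp_le_exp.2 (mul_le_mul_of_nonpos_left h hl)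
        · have : exp l - 1 ≤ 0 := by linarith [exp_le_one_iff.2 hl]
          simp only [g]
          nlinarith [div_le_div_of_nonneg_right (sub_le_sub_left h (k : ℝ)) (Nat.cast_nonneg n)]
    have hg_mean : ∫ ω, g (collisions X k ω) ∂μ = g m := by
      have hC := integrable_comp_collisions (μ := μ) hX Nat.cast k
      have hdev : Integrable (fun ω => (exp l - 1) * ((k - collisions X k ω : ℝ) / n)) μ :=
        (((integrable_const _).sub hC).div_const _).const_mul _
      simp only [g]
      rw [integral_add (integrable_const _) hdev, integral_const_mul, integral_div,
        integral_sub (integrable_const _) hC]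
      simp [m]
    have hmean : ∫ ω, (collisions X (k + 1) ω : ℝ) ∂μ = m + (k - m) / n :=
      integral_collisions_succ hX hindep hunif hn k
    calc mgf (fun ω => (collisions X (k + 1) ω : ℝ)) μ l
        = ∫ ω, exp (l * collisions X k ω) * g (collisions X k ω) ∂μ :=
          mgf_collisions_succ hX hindep hunif hn l k
      _ ≤ mgf (fun ω => (collisions X k ω : ℝ)) μ l * g m :=
          integral_mul_le_of_antivary hanti
            (integrable_comp_collisions hX (fun j => exp (l * j)) k)
            (integrable_comp_collisions hX (fun j => g j) k)
            (integrable_comp_collisions hX (fun j => exp (l * j) * g j) k) hg_mean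
      _ ≤ mgf (fun ω => (collisions X k ω : ℝ)) μ l * exp ((exp l - 1) * ((k - m) / n)) :=
          mul_le_mul_of_nonneg_left (by linarith [add_one_le_exp ((exp l - 1) * ((k - m) / n))])
            mgf_nonneg
      _ ≤ exp (m * (exp l - 1)) * exp ((exp l - 1) * ((k - m) / n)) :=
          mul_le_mul_of_nonneg_right ih (exp_pos _).le
      _ = exp ((∫ ω, (collisions X (k + 1) ω : ℝ) ∂μ) * (exp l - 1)) := by
          rw [← exp_add, hmean]
          ring_nf

end Collisions

theorem stmt_18_general {Ω : Type*} [MeasurableSpace Ω] (μ : Measure Ω) [IsProbabilityMeasure μ]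
    (n b : ℕ) (hn : 1 ≤ n)
    (X : ℕ → Ω → ℕ) (hmeas : ∀ i, Measurable (X i))
    (hindep : iIndepFun X μ)
    (hunif : ∀ i, μ.map (X i) = unifBins n)
    (m : ℝ) (hm : m = ∫ ω, (collisions X b ω : ℝ) ∂μ) (hmpos : 0 < m) :
    ∀ t : ℝ, 0 < t →
      (μ {ω | (collisions X b ω : ℝ) - m ≤ -t}).toReal ≤ Real.exp (-t ^ 2 / (2 * m)) ∧
      (μ {ω | t ≤ (collisions X b ω : ℝ) - m}).toReal ≤ Real.exp (-t ^ 2 / (2 * m + t)) := by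
  intro t ht
  have hint (s : ℝ) : Integrable (fun ω => exp (s * collisions X b ω)) μ :=
    integrable_comp_collisions hmeas (fun j => exp (s * j)) b
  have hmgf (s : ℝ) : mgf (fun ω => (collisions X b ω : ℝ)) μ s ≤ exp (m * (exp s - 1)) :=
    hm ▸ mgf_collisions_le hmeas hindep hunif hn s b
  exact ⟨measure_sub_le_neg_le_of_mgf_le_poisson hmpos hint hmgf ht,
    measure_le_sub_le_of_mgf_le_poisson hmpos.le hint hmgf ht⟩

theorem stmt_18 {Ω : Type*} [MeasurableSpace Ω] (μ : Measure Ω) [IsProbabilityMeasure μ]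
    (n b : ℕ) (hn : 1 ≤ n) (hb : 1 ≤ b)
    (X : ℕ → Ω → ℕ) (hmeas : ∀ i, Measurable (X i))
    (hindep : iIndepFun X μ)
    (hunif : ∀ i, μ.map (X i) = unifBins n)
    (m : ℝ) (hm : m = ∫ ω, (collisions X b ω : ℝ) ∂μ) (hmpos : 0 < m) :
    ∀ t : ℝ, 0 < t →
      (μ {ω | (collisions X b ω : ℝ) - m ≤ -t}).toReal ≤ Real.exp (-t ^ 2 / (2 * m)) ∧
      (μ {ω | t ≤ (collisions X b ω : ℝ) - m}).toReal ≤ Real.exp (-t ^ 2 / (2 * m + t)) :=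
  stmt_18_general μ n b hn X hmeas hindep hunif m hm hmpos
end
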